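/- arXiv:2512.04247 — 4 statements merged into one kernel-verified Lean document; each statement's English description precedes it below -/
import Mathlib

section
/- Finite-time tube invariance. Let T_f > 0, μ > 0 and c₀ ≥ 0 be such that the union over all t ∈ [0, T_f] of the tube sets 𝒱_{ξd,μ,c₀}(t) is contained in 𝒟_r. Then for every initial state (ξ₀, η₀) ∈ 𝒱_{ξd,μ,c₀}(0) × 𝒫_r, every solution (ξ, η) of the closed-loop system on [0, T_f] with (ξ(0), η(0)) = (ξ₀, η₀) satisfies (ξ(t), η(t)) ∈ 𝒱_{ξd,μ,c₀}(t) × 𝒫_r for all t ∈ [0, T_f]. -/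
noncomputable section

/-- A function of class `K`: continuous, strictly increasing on `[0,∞)`, zero at zero,
and mapping `[0,∞)` into `[0,∞)`. -/
def IsClassK (α : ℝ → ℝ) : Prop :=
  ContinuousOn α (Set.Ici 0) ∧ StrictMonoOn α (Set.Ici 0) ∧ α 0 = 0 ∧
    ∀ s, 0 ≤ s → 0 ≤ α s

/-- A function of class `K∞`: class `K` and tending to infinity. -/
def IsClassKInf (α : ℝ → ℝ) : Prop :=
  IsClassK α ∧ Filter.Tendsto α Filter.atTop Filter.atTop

/-- The unit saturation function. -/
def satFn (s : ℝ) : ℝ := if |s| ≤ 1 then s else Real.sign s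

/-- The Brunovský drift matrix `A` (as a map): `(Aξ)ᵢ = ξᵢ₊₁`, last component `0`. -/
def brunA (n : ℕ) (x : EuclideanSpace ℝ (Fin n)) : EuclideanSpace ℝ (Fin n) :=
  WithLp.toLp 2 (fun i => if h : (i : ℕ) + 1 < n then x ⟨(i : ℕ) + 1, h⟩ else 0)

/-- The Brunovský input vector `B = e_{nξ}` (last standard basis vector). -/
def Bvec (n : ℕ) : EuclideanSpace ℝ (Fin n) :=
  WithLp.toLp 2 (fun i => if (i : ℕ) = n - 1 then 1 else 0)

/-- The desired state `ξ_d(t) = (y_d(t), y_d'(t), …, y_d^{(n-1)}(t))`. -/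
def xid (n : ℕ) (yd : ℝ → ℝ) (t : ℝ) : EuclideanSpace ℝ (Fin n) :=
  WithLp.toLp 2 (fun i => iteratedDeriv (i : ℕ) yd t)

/-- The Lyapunov-redesign feedback `v_L(ξ̄) = -ρ sat(ρ μ⁻¹ ∇V_N(ξ̄)·B)`. -/
def vLfun (n : ℕ) (VN : EuclideanSpace ℝ (Fin n) → ℝ) (ρ μ : ℝ)
    (x : EuclideanSpace ℝ (Fin n)) : ℝ :=
  -ρ * satFn (ρ * μ⁻¹ * fderiv ℝ VN x (Bvec n))

-- AUX
lemma satBound (ρ μ δ w d : ℝ) (hμ : 0 < μ) (hδ : 0 ≤ δ) (hρ : δ ≤ ρ) (hd : |d| ≤ δ) :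
    (-ρ * satFn (ρ * μ⁻¹ * w) + d) * w ≤ μ / 4 := by
  have hdw : d * w ≤ δ * |w| := by
    calc d * w ≤ |d * w| := le_abs_self _
    _ = |d| * |w| := abs_mul _ _
    _ ≤ δ * |w| := by gcongr
  unfold satFn
  split_ifs with h
  · have h1 : (-ρ * (ρ * μ⁻¹ * w) + d) * w = -(ρ * ρ * w * w) * μ⁻¹ + d * w := by ring
    rw [h1]
    have key : -(ρ * ρ * w * w) + δ * |w| * μ ≤ μ ^ 2 / 4 := by
      nlinarith [sq_nonneg (ρ * |w| - μ / 2), sq_abs w,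
        mul_nonneg (mul_nonneg (sub_nonneg.mpr hρ) (abs_nonneg w)) hμ.le]
    have h4 : -(ρ * ρ * w * w) * μ⁻¹ + δ * |w| ≤ μ / 4 := by
      rw [← sub_nonneg]
      have h5 : μ / 4 - (-(ρ * ρ * w * w) * μ⁻¹ + δ * |w|) =
          (μ ^ 2 / 4 - (-(ρ * ρ * w * w) + δ * |w| * μ)) * μ⁻¹ := by
        field_simp
      rw [h5]
      exact mul_nonneg (by linarith) (inv_pos.mpr hμ).le
    linarith
  · have hw : w ≠ 0 := by rintro rfl; simp at h
    have hρ0 : 0 < ρ := by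
      rcases lt_or_eq_of_le (hδ.trans hρ) with h' | h'
      · exact h'
      · exfalso; rw [← h'] at h; simp at h
    rcases lt_or_gt_of_ne hw with hw0 | hw0
    · have hs : ρ * μ⁻¹ * w < 0 := by
        have := mul_pos hρ0 (inv_pos.mpr hμ)
        nlinarith
      rw [Real.sign_of_neg hs]
      nlinarith [abs_of_neg hw0]
    · have hs : 0 < ρ * μ⁻¹ * w := by positivity
      rw [Real.sign_of_pos hs]
      nlinarith [abs_of_pos hw0]

lemma classK_mono {α : ℝ → ℝ} (hα : IsClassK α) {a b : ℝ} (ha : 0 ≤ a) (hab : a ≤ b) :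
    α a ≤ α b :=
  hα.2.1.monotoneOn ha (ha.trans hab) hab

lemma classKInf_surjOn {α : ℝ → ℝ} (hα : IsClassKInf α) {s : ℝ} (hs : 0 ≤ s) :
    ∃ u, 0 ≤ u ∧ α u = s := by
  obtain ⟨M, hM⟩ := (Filter.tendsto_atTop.mp hα.2 s).exists_forall_of_atTop
  set M' := max M 0 with hM'
  have h0M : (0:ℝ) ≤ M' := le_max_right _ _
  have hcont : ContinuousOn α (Set.Icc 0 M') := hα.1.1.mono (Set.Icc_subset_Ici_self)
  have hsub := intermediate_value_Icc h0M hcont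
  have hsmem : s ∈ Set.Icc (α 0) (α M') := by
    constructor
    · rw [hα.1.2.2.1]; exact hs
    · exact hM M' (le_max_left _ _)
  obtain ⟨u, hu, hus⟩ := hsub hsmem
  exact ⟨u, hu.1, hus⟩

lemma brunA_sub (n : ℕ) (x y : EuclideanSpace ℝ (Fin n)) :
    brunA n (x - y) = brunA n x - brunA n y := by
  ext i
  show brunA n (x - y) i = brunA n x i - brunA n y i
  simp only [brunA, PiLp.toLp_apply]
  split_ifs with h
  · rfl
  · simp

lemma xid_hasDerivAt (n : ℕ) (yd : ℝ → ℝ) (hyd : ContDiff ℝ (n : ℕ∞) yd) (t : ℝ) :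
    HasDerivAt (xid n yd) (brunA n (xid n yd t) + iteratedDeriv n yd t • Bvec n) t := by
  have hF : HasDerivAt (fun t => (fun i : Fin n => iteratedDeriv (i : ℕ) yd t))
      (fun i : Fin n => iteratedDeriv ((i : ℕ) + 1) yd t) t := by
    rw [hasDerivAt_pi]
    intro i
    have hdiff : Differentiable ℝ (iteratedDeriv (i : ℕ) yd) :=
      hyd.differentiable_iteratedDeriv _ (by exact_mod_cast i.isLt)
    have h2 := (hdiff t).hasDerivAt
    simpa [iteratedDeriv_succ] using h2
  let φ : (∀ _ : Fin n, ℝ) ≃L[ℝ] EuclideanSpace ℝ (Fin n) :=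
    (PiLp.continuousLinearEquiv 2 ℝ (fun _ : Fin n => ℝ)).symm
  have h3 := ((φ : (∀ _ : Fin n, ℝ) →L[ℝ] EuclideanSpace ℝ (Fin n)).hasFDerivAt).comp_hasDerivAt
    t hF
  have hveq : (brunA n (xid n yd t) + iteratedDeriv n yd t • Bvec n)
      = φ (fun i : Fin n => iteratedDeriv ((i : ℕ) + 1) yd t) := by
    ext i
    show brunA n (xid n yd t) i + iteratedDeriv n yd t * Bvec n i
        = iteratedDeriv ((i : ℕ) + 1) yd t
    simp only [brunA, Bvec, xid, PiLp.toLp_apply]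
    split_ifs with h1 h2
    · omega
    · simp
    · have : (i : ℕ) + 1 = n := by omega
      rw [this]; simp
    · omega
  rw [hveq]
  exact (by have := h3; exact this : HasDerivAt (⇑(φ : (∀ _ : Fin n, ℝ) →L[ℝ] EuclideanSpace ℝ (Fin n)) ∘ fun t i => iteratedDeriv (i : ℕ) yd t) _ t)

lemma tube_core (Tf cr : ℝ) (hTf : 0 < Tf)
    (W U ν : ℝ → ℝ) (W' U' : ℝ → ℝ) (G : ℝ → ℝ) (D : ℝ → Prop)
    (contW : ContinuousOn W (Set.Icc 0 Tf)) (contU : ContinuousOn U (Set.Icc 0 Tf))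
    (contν : ContinuousOn ν (Set.Ici 0))
    (hWd : ∀ t ∈ Set.Icc (0:ℝ) Tf, HasDerivWithinAt W (W' t) (Set.Icc 0 Tf) t)
    (hUd : ∀ t ∈ Set.Icc (0:ℝ) Tf, HasDerivWithinAt U (U' t) (Set.Icc 0 Tf) t)
    (hνd : ∀ t, 0 ≤ t → HasDerivWithinAt ν (G (ν t)) (Set.Ici 0) t)
    (hDopen : ∀ t ∈ Set.Icc (0:ℝ) Tf, D t → ∀ᶠ s in nhdsWithin t (Set.Icc 0 Tf), D s)
    (hDr : ∀ t ∈ Set.Icc (0:ℝ) Tf, W t ≤ ν t → D t)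
    (hGanti : ∀ a b, 0 ≤ a → a ≤ b → G b ≤ G a)
    (hW' : ∀ t ∈ Set.Icc (0:ℝ) Tf, D t → U t < cr → W' t ≤ G (W t))
    (hνnn : ∀ t, 0 ≤ t → 0 ≤ ν t)
    (hU' : ∀ t ∈ Set.Icc (0:ℝ) Tf, D t → cr ≤ U t → U' t < 0)
    (hW0 : W 0 ≤ ν 0) (hU0 : U 0 < cr) :
    ∀ t ∈ Set.Icc (0:ℝ) Tf, W t ≤ ν t ∧ U t < cr := by
  set A : Set ℝ :=
    {T | T ∈ Set.Icc (0:ℝ) Tf ∧ ∀ s ∈ Set.Icc (0:ℝ) T, W s ≤ ν s ∧ U s < cr} with hA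
  have h0A : (0:ℝ) ∈ A := by
    refine ⟨⟨le_refl 0, hTf.le⟩, fun s hs => ?_⟩
    have hs0 : s = 0 := le_antisymm hs.2 hs.1
    rw [hs0]; exact ⟨hW0, hU0⟩
  have hAbdd : BddAbove A := ⟨Tf, fun x hx => hx.1.2⟩
  have hAne : A.Nonempty := ⟨0, h0A⟩
  set T' := sSup A with hT'
  have hT'0 : 0 ≤ T' := le_csSup hAbdd h0A
  have hT'Tf : T' ≤ Tf := csSup_le hAne fun x hx => hx.1.2
  have hT'Icc : T' ∈ Set.Icc (0:ℝ) Tf := ⟨hT'0, hT'Tf⟩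
  have hbefore : ∀ s, 0 ≤ s → s < T' → W s ≤ ν s ∧ U s < cr := by
    intro s hs0 hsT
    obtain ⟨T, hTA, hsT2⟩ := exists_lt_of_lt_csSup hAne hsT
    exact hTA.2 s ⟨hs0, hsT2.le⟩
  have hPT' : W T' ≤ ν T' ∧ U T' < cr := by
    rcases eq_or_lt_of_le hT'0 with h0 | h0
    · rw [← h0]; exact ⟨hW0, hU0⟩
    · have hne : (nhdsWithin T' (Set.Ico 0 T')).NeBot :=
        (right_nhdsWithin_Ioo_neBot h0).mono (nhdsWithin_mono _ Set.Ioo_subset_Ico_self)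
      have hsub : Set.Ico 0 T' ⊆ Set.Icc 0 Tf := fun x hx => ⟨hx.1, hx.2.le.trans hT'Tf⟩
      have hsub2 : Set.Ico 0 T' ⊆ Set.Ici 0 := fun x hx => hx.1
      have hWc : Filter.Tendsto (fun s => W s - ν s) (nhdsWithin T' (Set.Ico 0 T'))
          (nhds (W T' - ν T')) :=
        (((contW T' hT'Icc).mono hsub).sub
          ((contν T' (Set.mem_Ici.mpr hT'0)).mono hsub2))
      have hWT' : W T' ≤ ν T' := by
        have h2 : ∀ᶠ s in nhdsWithin T' (Set.Ico 0 T'), W s - ν s ≤ 0 :=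
          eventually_nhdsWithin_of_forall fun s hs => sub_nonpos.mpr (hbefore s hs.1 hs.2).1
        have := le_of_tendsto hWc h2
        linarith
      refine ⟨hWT', ?_⟩
      by_contra hUc
      have hUT'le : U T' ≤ cr := by
        have hUcont : Filter.Tendsto U (nhdsWithin T' (Set.Ico 0 T')) (nhds (U T')) :=
          (contU T' hT'Icc).mono hsub
        exact le_of_tendsto hUcont
          (eventually_nhdsWithin_of_forall fun s hs => (hbefore s hs.1 hs.2).2.le)
      have hUeq : U T' = cr := le_antisymm hUT'le (not_lt.mp hUc)
      have hDT' : D T' := hDr T' hT'Icc hWT'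
      have hU'neg : U' T' < 0 := hU' T' hT'Icc hDT' hUeq.ge
      have hder := (hUd T' hT'Icc).mono hsub
      rw [hasDerivWithinAt_iff_tendsto_slope] at hder
      have hT'notin : T' ∉ Set.Ico 0 T' := fun h => lt_irrefl _ h.2
      rw [Set.diff_singleton_eq_self hT'notin] at hder
      have h6 : ∀ᶠ s in nhdsWithin T' (Set.Ico 0 T'), slope U T' s < 0 :=
        hder (Iio_mem_nhds hU'neg)
      have h7 : ∀ᶠ s in nhdsWithin T' (Set.Ico 0 T'), 0 < slope U T' s := by
        refine eventually_nhdsWithin_of_forall fun s hs => ?_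
        rw [slope_def_field]
        apply div_pos_of_neg_of_neg
        · have := (hbefore s hs.1 hs.2).2; linarith [hUeq]
        · linarith [hs.2]
      haveI := hne
      obtain ⟨s, h9, h10⟩ := (h6.and h7).exists
      linarith
  have hT'A : T' ∈ A := by
    refine ⟨hT'Icc, fun s hs => ?_⟩
    rcases lt_or_eq_of_le hs.2 with h | h
    · exact hbefore s hs.1 h
    · rw [h]; exact hPT'
  have hT'eq : T' = Tf := by
    by_contra hne2
    have hT'lt : T' < Tf := lt_of_le_of_ne hT'Tf hne2
    have hDev : ∀ᶠ s in nhdsWithin T' (Set.Icc 0 Tf), D s :=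
      hDopen T' hT'Icc (hDr T' hT'Icc hPT'.1)
    have hUev : ∀ᶠ s in nhdsWithin T' (Set.Icc 0 Tf), U s < cr :=
      (contU T' hT'Icc) (Iio_mem_nhds hPT'.2)
    obtain ⟨ε, hε, hball⟩ := Metric.mem_nhdsWithin_iff.mp (hDev.and hUev)
    set T₁ := min (T' + ε / 2) Tf with hT₁
    have hT'T₁ : T' < T₁ := lt_min (by linarith) hT'lt
    have hT₁Tf : T₁ ≤ Tf := min_le_right _ _
    have hT₁0 : 0 ≤ T₁ := hT'0.trans hT'T₁.le
    have hJsub : Set.Icc T' T₁ ⊆ Set.Icc 0 Tf := fun x hx =>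
      ⟨hT'0.trans hx.1, hx.2.trans hT₁Tf⟩
    have hJprop : ∀ s ∈ Set.Icc T' T₁, D s ∧ U s < cr := by
      intro s hs
      apply hball
      refine ⟨?_, hJsub hs⟩
      rw [Metric.mem_ball, Real.dist_eq, abs_lt]
      have h1 : s ≤ T' + ε / 2 := hs.2.trans (min_le_left _ _)
      constructor <;> [linarith [hs.1]; linarith]
    have hWν : ∀ s ∈ Set.Icc T' T₁, W s ≤ ν s := by
      by_contra hcon
      push_neg at hcon
      obtain ⟨t₂, ht₂J, ht₂⟩ := hcon
      set C := {t | t ∈ Set.Icc T' t₂ ∧ W t ≤ ν t} with hC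
      have hT'C : T' ∈ C := ⟨⟨le_refl _, ht₂J.1⟩, hPT'.1⟩
      have hCne : C.Nonempty := ⟨T', hT'C⟩
      have hCbdd : BddAbove C := ⟨t₂, fun x hx => hx.1.2⟩
      set t₃ := sSup C with ht₃def
      have ht₃mem : t₃ ∈ Set.Icc T' t₂ :=
        ⟨le_csSup hCbdd hT'C, csSup_le hCne fun x hx => hx.1.2⟩
      have hCsubJ : C ⊆ Set.Icc T' T₁ := fun x hx => ⟨hx.1.1, hx.1.2.trans ht₂J.2⟩
      have hCsub : C ⊆ Set.Icc 0 Tf := fun x hx => hJsub (hCsubJ hx)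
      have hCsub2 : C ⊆ Set.Ici 0 := fun x hx => (hCsub hx).1
      have ht₃Icc : t₃ ∈ Set.Icc (0:ℝ) Tf :=
        hJsub ⟨ht₃mem.1, ht₃mem.2.trans ht₂J.2⟩
      have ht₃W : W t₃ ≤ ν t₃ := by
        have hcl : t₃ ∈ closure C := csSup_mem_closure hCne hCbdd
        haveI hnb : (nhdsWithin t₃ C).NeBot := mem_closure_iff_nhdsWithin_neBot.mp hcl
        have hWc : Filter.Tendsto (fun s => W s - ν s) (nhdsWithin t₃ C)
            (nhds (W t₃ - ν t₃)) :=
          (((contW t₃ ht₃Icc).mono hCsub).sub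
            ((contν t₃ (Set.mem_Ici.mpr ht₃Icc.1)).mono hCsub2))
        have h2 := le_of_tendsto hWc
          (eventually_nhdsWithin_of_forall fun s hs => sub_nonpos.mpr hs.2)
        linarith
      have ht₃t₂ : t₃ < t₂ := by
        rcases lt_or_eq_of_le ht₃mem.2 with h | h
        · exact h
        · rw [h] at ht₃W; linarith
      have hgt : ∀ t, t₃ < t → t ≤ t₂ → ν t < W t := by
        intro t h1 h2
        by_contra hc
        push_neg at hc
        have htC : t ∈ C := ⟨⟨ht₃mem.1.trans h1.le, h2⟩, hc⟩
        exact absurd (le_csSup hCbdd htC) (not_le.mpr h1)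
      have key : ∀ x ∈ Set.Ioo t₃ t₂,
          HasDerivAt (fun t => W t - ν t) (W' x - G (ν x)) x ∧ W' x - G (ν x) ≤ 0 := by
        intro x hx
        have hx0 : (0:ℝ) < x := lt_of_le_of_lt ht₃Icc.1 hx.1
        have hxTf : x < Tf := lt_of_lt_of_le hx.2 (ht₂J.2.trans hT₁Tf)
        have hxIcc : x ∈ Set.Icc (0:ℝ) Tf := ⟨hx0.le, hxTf.le⟩
        have hxJ : x ∈ Set.Icc T' T₁ := ⟨ht₃mem.1.trans hx.1.le, hx.2.le.trans ht₂J.2⟩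
        have hWx : HasDerivAt W (W' x) x :=
          (hWd x hxIcc).hasDerivAt (Icc_mem_nhds hx0 hxTf)
        have hνx : HasDerivAt ν (G (ν x)) x :=
          (hνd x hx0.le).hasDerivAt (Ici_mem_nhds hx0)
        refine ⟨hWx.sub hνx, ?_⟩
        have hDx := (hJprop x hxJ).1
        have hUx := (hJprop x hxJ).2
        have h1 : W' x ≤ G (W x) := hW' x hxIcc hDx hUx
        have h2 : ν x < W x := hgt x hx.1 hx.2.le
        have h3 : G (W x) ≤ G (ν x) := hGanti (ν x) (W x) (hνnn x hx0.le) h2.le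
        linarith
      have hanti : AntitoneOn (fun t => W t - ν t) (Set.Icc t₃ t₂) := by
        apply antitoneOn_of_deriv_nonpos (convex_Icc t₃ t₂)
        · exact (((contW.mono (Set.Icc_subset_Icc ht₃Icc.1 (ht₂J.2.trans hT₁Tf))).sub
            (contν.mono fun x hx => ht₃Icc.1.trans hx.1)))
        · intro x hx
          rw [interior_Icc] at hx
          exact ((key x hx).1.differentiableAt).differentiableWithinAt
        · intro x hx
          rw [interior_Icc] at hx
          rw [(key x hx).1.deriv]
          exact (key x hx).2
      have hfinal := hanti (Set.left_mem_Icc.mpr ht₃t₂.le)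
        (Set.right_mem_Icc.mpr ht₃t₂.le) ht₃t₂.le
      simp only [] at hfinal
      linarith
    have hT₁A : T₁ ∈ A := by
      refine ⟨⟨hT₁0, hT₁Tf⟩, fun s hs => ?_⟩
      rcases le_or_gt s T' with h | h
      · exact hT'A.2 s ⟨hs.1, h⟩
      · exact ⟨hWν s ⟨h.le, hs.2⟩, (hJprop s ⟨h.le, hs.2⟩).2⟩
    exact absurd (le_csSup hAbdd hT₁A) (not_le.mpr hT'T₁)
  intro t ht
  exact hT'A.2 t ⟨ht.1, hT'eq ▸ ht.2⟩

lemma inv_mono {α αinv : ℝ → ℝ} (hα : IsClassKInf α)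
    (hinv : ∀ s, 0 ≤ s → αinv (α s) = s ∧ 0 ≤ αinv s ∧ α (αinv s) = s)
    {a b : ℝ} (ha : 0 ≤ a) (hab : a ≤ b) : αinv a ≤ αinv b := by
  obtain ⟨u, hu, hua⟩ := classKInf_surjOn hα ha
  obtain ⟨v, hv, hvb⟩ := classKInf_surjOn hα (ha.trans hab)
  rw [← hua, ← hvb, (hinv u hu).1, (hinv v hv).1]
  exact (hα.1.2.1.le_iff_le (Set.mem_Ici.mpr hu) (Set.mem_Ici.mpr hv)).mp
    (by rw [hua, hvb]; exact hab)

/-- **Finite-time tube invariance.** -/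
theorem finite_time_tube_invariance
    (nξ nη : ℕ) (hnξ : 1 ≤ nξ)
    (q : EuclideanSpace ℝ (Fin nξ) → EuclideanSpace ℝ (Fin nη) → EuclideanSpace ℝ (Fin nη))
    (hq : LocallyLipschitz
      (fun p : EuclideanSpace ℝ (Fin nξ) × EuclideanSpace ℝ (Fin nη) => q p.1 p.2))
    (Δ : EuclideanSpace ℝ (Fin nξ) → EuclideanSpace ℝ (Fin nη) → ℝ → ℝ)
    (hΔlip : ∀ t, 0 ≤ t → LocallyLipschitz
      (fun p : EuclideanSpace ℝ (Fin nξ) × EuclideanSpace ℝ (Fin nη) => Δ p.1 p.2 t))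
    (hΔpc : ∀ ξ η, ∃ S : Set ℝ, S.Countable ∧
      ContinuousOn (fun t => Δ ξ η t) (Set.Ici 0 \ S))
    (Vη : EuclideanSpace ℝ (Fin nη) → ℝ) (hVη : ContDiff ℝ 1 Vη)
    (α₁ α₂ : ℝ → ℝ) (hα₁ : IsClassKInf α₁) (hα₂ : IsClassKInf α₂)
    (hVηb : ∀ η, α₁ ‖η‖ ≤ Vη η ∧ Vη η ≤ α₂ ‖η‖)
    (α₃ γ : ℝ → ℝ) (hα₃ : IsClassK α₃) (hγ : IsClassK γ)
    (hVηd : ∀ ξ η, γ ‖ξ‖ ≤ ‖η‖ → fderiv ℝ Vη η (q ξ η) ≤ -α₃ ‖η‖)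
    (r : ℝ) (hr : 0 < r)
    (Dr : Set (EuclideanSpace ℝ (Fin nξ))) (hDropen : IsOpen Dr)
    (hDrball : Dr ⊆ Metric.ball 0 r)
    (cr : ℝ) (hcr : α₂ (γ r) ≤ cr)
    (δ : ℝ) (hδ : 0 ≤ δ)
    (hΔb : ∀ ξ ∈ Dr, ∀ η ∈ {η | Vη η < cr}, ∀ t, 0 ≤ t → |Δ ξ η t| ≤ δ)
    (yd : ℝ → ℝ) (hyd : ContDiff ℝ (nξ : ℕ∞) yd)
    (hydb : ∀ k, k ≤ nξ → ∃ M, ∀ t, 0 ≤ t → |iteratedDeriv k yd t| ≤ M)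
    (hxid : ∀ t, 0 ≤ t → xid nξ yd t ∈ Dr)
    (vN : EuclideanSpace ℝ (Fin nξ) → ℝ) (hvN : LocallyLipschitz vN)
    (VN : EuclideanSpace ℝ (Fin nξ) → ℝ) (hVN : ContDiff ℝ 1 VN)
    (αN₁ αN₂ : ℝ → ℝ) (hαN₁ : IsClassKInf αN₁) (hαN₂ : IsClassKInf αN₂)
    (hVNb : ∀ x, αN₁ ‖x‖ ≤ VN x ∧ VN x ≤ αN₂ ‖x‖)
    (αN₃ : ℝ → ℝ) (hαN₃ : IsClassK αN₃)
    (hVNd : ∀ x, fderiv ℝ VN x (brunA nξ x + vN x • Bvec nξ) ≤ -αN₃ ‖x‖)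
    (ρ μ : ℝ) (hρ : δ ≤ ρ) (hμ : 0 < μ)
    (αN₂inv : ℝ → ℝ)
    (hαN₂inv : ∀ s, 0 ≤ s → αN₂inv (αN₂ s) = s ∧ 0 ≤ αN₂inv s ∧ αN₂ (αN₂inv s) = s)
    (hμrange : ∃ s, 0 ≤ s ∧ αN₃ s = μ / 4)
    (c₀ : ℝ) (hc₀ : 0 ≤ c₀)
    (ν : ℝ → ℝ) (hν0 : ν 0 = c₀) (hνnn : ∀ t, 0 ≤ t → 0 ≤ ν t)
    (hν : ∀ t, 0 ≤ t →
      HasDerivWithinAt ν (-αN₃ (αN₂inv (ν t)) + μ / 4) (Set.Ici 0) t)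
    (hνuniq : ∀ ν' : ℝ → ℝ, ν' 0 = c₀ →
      (∀ t, 0 ≤ t →
        HasDerivWithinAt ν' (-αN₃ (αN₂inv (ν' t)) + μ / 4) (Set.Ici 0) t) →
      ∀ t, 0 ≤ t → ν' t = ν t)
    -- the finite time horizon
    (Tf : ℝ) (hTf : 0 < Tf)
    -- finite-time tube condition: the union of the tube sets over [0,T_f] is in 𝒟_r
    (htube : (⋃ t ∈ Set.Icc (0 : ℝ) Tf,
        {ξ : EuclideanSpace ℝ (Fin nξ) | VN (ξ - xid nξ yd t) ≤ ν t}) ⊆ Dr)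
    -- a solution of the closed loop on [0,T_f]
    (ξf : ℝ → EuclideanSpace ℝ (Fin nξ)) (ηf : ℝ → EuclideanSpace ℝ (Fin nη))
    (hinitξ : ξf 0 ∈ {ξ : EuclideanSpace ℝ (Fin nξ) | VN (ξ - xid nξ yd 0) ≤ ν 0})
    (hinitη : ηf 0 ∈ {η | Vη η < cr})
    (hsolξ : ∀ t ∈ Set.Icc (0 : ℝ) Tf,
      HasDerivWithinAt ξf
        (brunA nξ (ξf t) +
          (iteratedDeriv nξ yd t + vN (ξf t - xid nξ yd t)
            + vLfun nξ VN ρ μ (ξf t - xid nξ yd t)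
            + Δ (ξf t) (ηf t) t) • Bvec nξ)
        (Set.Icc 0 Tf) t)
    (hsolη : ∀ t ∈ Set.Icc (0 : ℝ) Tf,
      HasDerivWithinAt ηf (q (ξf t) (ηf t)) (Set.Icc 0 Tf) t) :
    ∀ t ∈ Set.Icc (0 : ℝ) Tf,
      VN (ξf t - xid nξ yd t) ≤ ν t ∧ Vη (ηf t) < cr := by
  classical
  have hVNdiff : Differentiable ℝ VN := hVN.differentiable one_ne_zero
  have hVηdiff : Differentiable ℝ Vη := hVη.differentiable one_ne_zero
  -- abbreviations (as plain functions)
  refine tube_core Tf cr hTf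
    (fun t => VN (ξf t - xid nξ yd t)) (fun t => Vη (ηf t)) ν
    (fun t => fderiv ℝ VN (ξf t - xid nξ yd t)
      (brunA nξ (ξf t - xid nξ yd t) +
        (vN (ξf t - xid nξ yd t) + vLfun nξ VN ρ μ (ξf t - xid nξ yd t)
          + Δ (ξf t) (ηf t) t) • Bvec nξ))
    (fun t => fderiv ℝ Vη (ηf t) (q (ξf t) (ηf t)))
    (fun s => -αN₃ (αN₂inv s) + μ / 4)
    (fun t => ξf t ∈ Dr)
    ?_ ?_ ?_ ?_ ?_ ?_ ?_ ?_ ?_ ?_ ?_ ?_ ?_ ?_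
  -- continuity of W
  · have contξ : ContinuousOn ξf (Set.Icc 0 Tf) := fun t ht => (hsolξ t ht).continuousWithinAt
    have hdF : Differentiable ℝ (xid nξ yd) :=
      fun t => (xid_hasDerivAt nξ yd hyd t).differentiableAt
    have contxid : Continuous (xid nξ yd) := hdF.continuous
    exact hVN.continuous.comp_continuousOn (contξ.sub contxid.continuousOn)
  -- continuity of U
  · have contη : ContinuousOn ηf (Set.Icc 0 Tf) := fun t ht => (hsolη t ht).continuousWithinAt
    exact hVη.continuous.comp_continuousOn contη
  -- continuity of ν
  · exact fun t ht => (hν t ht).continuousWithinAt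
  -- derivative of W
  · intro t ht
    have hEd := (hsolξ t ht).sub (xid_hasDerivAt nξ yd hyd t).hasDerivWithinAt
    have hveq :
        (brunA nξ (ξf t) +
            (iteratedDeriv nξ yd t + vN (ξf t - xid nξ yd t)
              + vLfun nξ VN ρ μ (ξf t - xid nξ yd t) + Δ (ξf t) (ηf t) t) • Bvec nξ)
          - (brunA nξ (xid nξ yd t) + iteratedDeriv nξ yd t • Bvec nξ)
        = brunA nξ (ξf t - xid nξ yd t) +
            (vN (ξf t - xid nξ yd t) + vLfun nξ VN ρ μ (ξf t - xid nξ yd t)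
              + Δ (ξf t) (ηf t) t) • Bvec nξ := by
      rw [brunA_sub]
      module
    rw [hveq] at hEd
    exact ((hVNdiff _).hasFDerivAt).comp_hasDerivWithinAt t hEd
  -- derivative of U
  · intro t ht
    exact ((hVηdiff _).hasFDerivAt).comp_hasDerivWithinAt t (hsolη t ht)
  -- derivative of ν
  · exact hν
  -- openness of D along the solution
  · intro t ht hD
    exact ((hsolξ t ht).continuousWithinAt) (hDropen.mem_nhds hD)
  -- tube ⊆ Dr
  · intro t ht h
    exact htube (Set.mem_biUnion ht h)
  -- G antitone
  · intro a b ha hab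
    have h1 : αN₂inv a ≤ αN₂inv b := inv_mono hαN₂ hαN₂inv ha hab
    have h2 : 0 ≤ αN₂inv a := (hαN₂inv a ha).2.1
    have h3 := classK_mono hαN₃ h2 h1
    linarith
  -- the W' bound
  · intro t ht hD hU
    have hdb : |Δ (ξf t) (ηf t) t| ≤ δ := hΔb (ξf t) hD (ηf t) hU t ht.1
    set x := ξf t - xid nξ yd t with hx
    set d := Δ (ξf t) (ηf t) t with hd
    have hsplit : brunA nξ x + (vN x + vLfun nξ VN ρ μ x + d) • Bvec nξ
        = (brunA nξ x + vN x • Bvec nξ) + (vLfun nξ VN ρ μ x + d) • Bvec nξ := by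
      module
    have hVx0 : 0 ≤ VN x :=
      le_trans (hαN₁.1.2.2.2 _ (norm_nonneg x)) (hVNb x).1
    calc fderiv ℝ VN x (brunA nξ x + (vN x + vLfun nξ VN ρ μ x + d) • Bvec nξ)
        = fderiv ℝ VN x (brunA nξ x + vN x • Bvec nξ)
          + (vLfun nξ VN ρ μ x + d) * fderiv ℝ VN x (Bvec nξ) := by
          rw [hsplit, map_add, map_smul, smul_eq_mul]
      _ ≤ -αN₃ ‖x‖ + μ / 4 := by
          have h1 := hVNd x
          have h2 : (vLfun nξ VN ρ μ x + d) * fderiv ℝ VN x (Bvec nξ) ≤ μ / 4 := by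
            have h3 := satBound ρ μ δ (fderiv ℝ VN x (Bvec nξ)) d hμ hδ hρ hdb
            simpa [vLfun] using h3
          linarith
      _ ≤ -αN₃ (αN₂inv (VN x)) + μ / 4 := by
          have h3 : αN₂inv (VN x) ≤ ‖x‖ := by
            calc αN₂inv (VN x) ≤ αN₂inv (αN₂ ‖x‖) :=
                  inv_mono hαN₂ hαN₂inv hVx0 (hVNb x).2
              _ = ‖x‖ := (hαN₂inv ‖x‖ (norm_nonneg x)).1
          have h5 : 0 ≤ αN₂inv (VN x) := (hαN₂inv (VN x) hVx0).2.1
          have h6 := classK_mono hαN₃ h5 h3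
          linarith
  -- ν nonneg
  · exact hνnn
  -- the U' bound
  · intro t ht hD hU
    have hnorm : ‖ξf t‖ < r := by
      have := hDrball hD
      rwa [mem_ball_zero_iff] at this
    have hγr : 0 < γ r := by
      have h1 := hγ.2.1 (Set.self_mem_Ici) (Set.mem_Ici.mpr hr.le) hr
      rwa [hγ.2.2.1] at h1
    have hηnorm : γ r ≤ ‖ηf t‖ := by
      have h1 : α₂ (γ r) ≤ α₂ ‖ηf t‖ :=
        le_trans hcr (le_trans hU (hVηb (ηf t)).2)
      exact (hα₂.1.2.1.le_iff_le (Set.mem_Ici.mpr hγr.le)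
        (Set.mem_Ici.mpr (norm_nonneg _))).mp h1
    have hq2 : γ ‖ξf t‖ ≤ ‖ηf t‖ :=
      le_trans (classK_mono hγ (norm_nonneg _) hnorm.le) hηnorm
    have h1 := hVηd (ξf t) (ηf t) hq2
    have hη0 : 0 < ‖ηf t‖ := lt_of_lt_of_le hγr hηnorm
    have hα₃pos : 0 < α₃ ‖ηf t‖ := by
      have h2 := hα₃.2.1 (Set.self_mem_Ici) (Set.mem_Ici.mpr hη0.le) hη0
      rwa [hα₃.2.2.1] at h2
    linarith
  -- initial conditions
  · exact hinitξ
  · exact hinitη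

end
end

section
/- Limit of the tube level. Let ᾱ₂ be of class K∞, ᾱ₃ of class K, and μ > 0 with μ/4 in the range of ᾱ₃; set ᾱ∞(μ) := ᾱ₂(ᾱ₃⁻¹(μ/4)). Let c₀ ≥ 0 and let ν : [0,∞) → [0,∞) be differentiable with ν̇(t) = −ᾱ₃(ᾱ₂⁻¹(ν(t))) + μ/4 for all t ≥ 0 and ν(0) = c₀. Then ν(t) converges to ᾱ∞(μ) as t → ∞. -/
noncomputable section

set_option maxHeartbeats 1600000 in
/-- **Limit of the tube level.** If `ν̇ = −ᾱ₃(ᾱ₂⁻¹(ν)) + μ/4` with `ν(0) = c₀ ≥ 0`,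
then `ν(t) → ᾱ∞(μ) := ᾱ₂(ᾱ₃⁻¹(μ/4))` as `t → ∞`. Here `s₃ = ᾱ₃⁻¹(μ/4)`. -/
theorem tube_level_limit
    (αN₂ αN₃ : ℝ → ℝ) (hαN₂ : IsClassKInf αN₂) (hαN₃ : IsClassK αN₃)
    (μ : ℝ) (hμ : 0 < μ)
    (s₃ : ℝ) (hs₃ : 0 ≤ s₃) (hs₃v : αN₃ s₃ = μ / 4)
    (αN₂inv : ℝ → ℝ)
    (hαN₂inv : ∀ s, 0 ≤ s → αN₂inv (αN₂ s) = s ∧ 0 ≤ αN₂inv s ∧ αN₂ (αN₂inv s) = s)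
    (c₀ : ℝ) (hc₀ : 0 ≤ c₀)
    (ν : ℝ → ℝ) (hν0 : ν 0 = c₀) (hνnn : ∀ t, 0 ≤ t → 0 ≤ ν t)
    (hν : ∀ t, 0 ≤ t →
      HasDerivWithinAt ν (-αN₃ (αN₂inv (ν t)) + μ / 4) (Set.Ici 0) t) :
    Filter.Tendsto ν Filter.atTop (nhds (αN₂ s₃)) := by
  obtain ⟨⟨hα₂cont, hα₂mono, hα₂0, hα₂nn⟩, _⟩ := hαN₂
  obtain ⟨hα₃cont, hα₃mono, hα₃0, hα₃nn⟩ := hαN₃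
  set L := αN₂ s₃ with hLdef
  have hL0 : 0 ≤ L := hα₂nn s₃ hs₃
  -- g := αN₃ ∘ αN₂inv is strictly increasing on [0,∞)
  have key : ∀ x y : ℝ, 0 ≤ x → 0 ≤ y → x < y →
      αN₃ (αN₂inv x) < αN₃ (αN₂inv y) := by
    intro x y hx hy hxy
    obtain ⟨-, hix, hax⟩ := hαN₂inv x hx
    obtain ⟨-, hiy, hay⟩ := hαN₂inv y hy
    have hlt : αN₂inv x < αN₂inv y := by
      by_contra h
      push_neg at h
      have := hα₂mono.monotoneOn (Set.mem_Ici.mpr hiy) (Set.mem_Ici.mpr hix) h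
      rw [hax, hay] at this
      linarith
    exact hα₃mono (Set.mem_Ici.mpr hix) (Set.mem_Ici.mpr hiy) hlt
  have key' : ∀ x y : ℝ, 0 ≤ x → 0 ≤ y → x ≤ y →
      αN₃ (αN₂inv x) ≤ αN₃ (αN₂inv y) := by
    intro x y hx hy hxy
    rcases eq_or_lt_of_le hxy with h | h
    · rw [h]
    · exact (key x y hx hy h).le
  have hgL : αN₃ (αN₂inv L) = μ / 4 := by
    rw [hLdef, (hαN₂inv s₃ hs₃).1, hs₃v]
  have hg0 : αN₃ (αN₂inv 0) = 0 := by
    have h0 : αN₂inv 0 = 0 := by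
      have := (hαN₂inv 0 le_rfl).1
      rwa [hα₂0] at this
    rw [h0, hα₃0]
  -- the Lyapunov function
  have hV' : ∀ t ∈ Set.Ici (0:ℝ), HasDerivWithinAt (fun t => (ν t - L) ^ 2)
      (2 * (ν t - L) * (-αN₃ (αN₂inv (ν t)) + μ / 4)) (Set.Ici 0) t := by
    intro t ht
    have h2 := ((hν t ht).sub_const L).fun_pow 2
    refine h2.congr_deriv ?_
    push_cast
    ring
  have hVcont : ContinuousOn (fun t => (ν t - L) ^ 2) (Set.Ici 0) :=
    fun t ht => (hV' t ht).continuousWithinAt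
  -- V is nonincreasing
  have hsign : ∀ t : ℝ, 0 ≤ t → 2 * (ν t - L) * (-αN₃ (αN₂inv (ν t)) + μ / 4) ≤ 0 := by
    intro t ht
    have hνt := hνnn t ht
    rcases le_or_gt (ν t) L with h | h
    · have := key' (ν t) L hνt hL0 h
      rw [hgL] at this
      nlinarith
    · have := key L (ν t) hL0 hνt h
      rw [hgL] at this
      nlinarith
  have hVanti : AntitoneOn (fun t => (ν t - L) ^ 2) (Set.Ici 0) := by
    apply antitoneOn_of_hasDerivWithinAt_nonpos (convex_Ici 0) hVcont
      (f' := fun t => 2 * (ν t - L) * (-αN₃ (αN₂inv (ν t)) + μ / 4))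
    · intro x hx
      exact (hV' x (interior_subset hx)).mono interior_subset
    · intro x hx
      exact hsign x (interior_subset hx)
  rw [Metric.tendsto_atTop]
  intro ε hε
  -- V eventually drops below ε²
  have hreach : ∃ T : ℝ, 0 ≤ T ∧ (ν T - L) ^ 2 < ε ^ 2 := by
    by_contra h
    push_neg at h
    set δ : ℝ := 2 * ε * min (αN₃ (αN₂inv (L + ε)) - μ / 4)
        (μ / 4 - αN₃ (αN₂inv (max (L - ε) 0))) with hδdef
    have hc1 : μ / 4 < αN₃ (αN₂inv (L + ε)) := by
      have := key L (L + ε) hL0 (by linarith) (by linarith)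
      rwa [hgL] at this
    have hc2 : αN₃ (αN₂inv (max (L - ε) 0)) < μ / 4 := by
      rcases le_or_gt 0 (L - ε) with hle | hlt
      · rw [max_eq_left hle]
        have := key (L - ε) L hle hL0 (by linarith)
        rwa [hgL] at this
      · rw [max_eq_right hlt.le, hg0]
        linarith
    have hδpos : 0 < δ := by
      apply mul_pos (by linarith)
      exact lt_min (by linarith) (by linarith)
    -- W := V + δ t is nonincreasing
    have hW' : ∀ t ∈ Set.Ici (0:ℝ), HasDerivWithinAt (fun t => (ν t - L) ^ 2 + δ * t)
        (2 * (ν t - L) * (-αN₃ (αN₂inv (ν t)) + μ / 4) + δ) (Set.Ici 0) t := by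
      intro t ht
      have hid : HasDerivWithinAt (fun t : ℝ => δ * t) δ (Set.Ici 0) t := by
        simpa using ((hasDerivAt_id t).const_mul δ).hasDerivWithinAt
      exact (hV' t ht).add hid
    have hWsign : ∀ t : ℝ, 0 ≤ t →
        2 * (ν t - L) * (-αN₃ (αN₂inv (ν t)) + μ / 4) + δ ≤ 0 := by
      intro t ht
      have hνt := hνnn t ht
      have hVt : ε ^ 2 ≤ (ν t - L) ^ 2 := h t ht
      have habs : ε ≤ |ν t - L| := by
        nlinarith [sq_abs (ν t - L), abs_nonneg (ν t - L)]
      rcases le_abs'.mp habs with hcase | hcase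
      · -- ν t ≤ L - ε
        have hup : ν t ≤ L - ε := by linarith
        have hLε : 0 ≤ L - ε := le_trans hνt hup
        have hmax : max (L - ε) 0 = L - ε := max_eq_left hLε
        rw [hmax] at hc2
        have hmono : αN₃ (αN₂inv (ν t)) ≤ αN₃ (αN₂inv (L - ε)) :=
          key' (ν t) (L - ε) hνt hLε hup
        have hmin : δ ≤ 2 * ε * (μ / 4 - αN₃ (αN₂inv (L - ε))) := by
          rw [hδdef, hmax]
          have h1 := min_le_right (αN₃ (αN₂inv (L + ε)) - μ / 4)
            (μ / 4 - αN₃ (αN₂inv (L - ε)))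
          nlinarith
        have hb : (0:ℝ) ≤ -αN₃ (αN₂inv (ν t)) + μ / 4 := by linarith
        have hp1 : (0:ℝ) ≤ (-ε - (ν t - L)) * (-αN₃ (αN₂inv (ν t)) + μ / 4) :=
          mul_nonneg (by linarith) hb
        have hp2 : (0:ℝ) ≤ ε * ((-αN₃ (αN₂inv (ν t)) + μ / 4)
            - (μ / 4 - αN₃ (αN₂inv (L - ε)))) :=
          mul_nonneg hε.le (by linarith)
        nlinarith [hp1, hp2, hmin]
      · -- ν t ≥ L + ε
        have hup : L + ε ≤ ν t := by linarith
        have hmono : αN₃ (αN₂inv (L + ε)) ≤ αN₃ (αN₂inv (ν t)) :=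
          key' (L + ε) (ν t) (by linarith) hνt hup
        have hmin : δ ≤ 2 * ε * (αN₃ (αN₂inv (L + ε)) - μ / 4) := by
          rw [hδdef]
          have h1 := min_le_left (αN₃ (αN₂inv (L + ε)) - μ / 4)
            (μ / 4 - αN₃ (αN₂inv (max (L - ε) 0)))
          nlinarith
        have hb : (0:ℝ) ≤ αN₃ (αN₂inv (ν t)) - μ / 4 := by linarith
        have hp1 : (0:ℝ) ≤ ((ν t - L) - ε) * (αN₃ (αN₂inv (ν t)) - μ / 4) :=
          mul_nonneg (by linarith) hb
        have hp2 : (0:ℝ) ≤ ε * ((αN₃ (αN₂inv (ν t)) - μ / 4)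
            - (αN₃ (αN₂inv (L + ε)) - μ / 4)) :=
          mul_nonneg hε.le (by linarith)
        nlinarith [hp1, hp2, hmin]
    have hWanti : AntitoneOn (fun t => (ν t - L) ^ 2 + δ * t) (Set.Ici 0) := by
      apply antitoneOn_of_hasDerivWithinAt_nonpos (convex_Ici 0)
        (fun t ht => (hW' t ht).continuousWithinAt)
        (f' := fun t => 2 * (ν t - L) * (-αN₃ (αN₂inv (ν t)) + μ / 4) + δ)
      · intro x hx
        exact (hW' x (interior_subset hx)).mono interior_subset
      · intro x hx
        exact hWsign x (interior_subset hx)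
    -- take t large to contradict V ≥ 0
    have hV0 : (0:ℝ) ≤ (ν 0 - L) ^ 2 := sq_nonneg _
    set T := (ν 0 - L) ^ 2 / δ + 1 with hT
    have hT0 : (0:ℝ) ≤ T := by
      rw [hT]
      have := div_nonneg hV0 hδpos.le
      linarith
    have hWle : (ν T - L) ^ 2 + δ * T ≤ (ν 0 - L) ^ 2 + δ * 0 :=
      hWanti (Set.mem_Ici.mpr le_rfl) (Set.mem_Ici.mpr hT0) hT0
    have hVT : (0:ℝ) ≤ (ν T - L) ^ 2 := sq_nonneg _
    have hδT : δ * T = (ν 0 - L) ^ 2 + δ := by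
      rw [hT]
      field_simp
    nlinarith
  obtain ⟨T, hT0, hTV⟩ := hreach
  refine ⟨T, fun t ht => ?_⟩
  have ht0 : (0:ℝ) ≤ t := le_trans hT0 ht
  have hVt : (ν t - L) ^ 2 ≤ (ν T - L) ^ 2 :=
    hVanti (Set.mem_Ici.mpr hT0) (Set.mem_Ici.mpr ht0) ht
  have hlt : (ν t - L) ^ 2 < ε ^ 2 := lt_of_le_of_lt hVt hTV
  rw [Real.dist_eq]
  nlinarith [sq_abs (ν t - L), abs_nonneg (ν t - L)]

end
end

section
/- Positive invariance of the internal-dynamics sublevel set. Let V_η : ℝ^{nη} → ℝ be C¹ with α₁(‖η‖₂) ≤ V_η(η) ≤ α₂(‖η‖₂) for class-K∞ functions α₁, α₂, and suppose ∇V_η(η)·q(ξ,η) ≤ −α₃(‖η‖₂) whenever ‖η‖₂ ≥ γ(‖ξ‖₂), for class-K functions α₃, γ and a continuous q : ℝ^{nξ} × ℝ^{nη} → ℝ^{nη}. Let r > 0, 0 < r_m < r, and c_r ≥ α₂(γ(r)). Let 0 < T ≤ ∞, let ξ : [0,T) → ℝ^{nξ} be continuous with ‖ξ(t)‖₂ ≤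 r_m for all t ∈ [0,T), and let η : [0,T) → ℝ^{nη} be differentiable with η̇(t) = q(ξ(t), η(t)) for all t ∈ [0,T) and V_η(η(0)) < c_r. Then V_η(η(t)) ≤ max{V_η(η(0)), α₂(γ(r_m))} < c_r for all t ∈ [0,T); in particular η(t) ∈ {η : V_η(η) < c_r} for all t ∈ [0,T). -/
noncomputable section

/-- **Positive invariance of the internal-dynamics sublevel set.** -/
theorem internal_sublevel_invariance
    (nξ nη : ℕ)
    (Vη : EuclideanSpace ℝ (Fin nη) → ℝ) (hVη : ContDiff ℝ 1 Vη)
    (α₁ α₂ : ℝ → ℝ) (hα₁ : IsClassKInf α₁) (hα₂ : IsClassKInf α₂)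
    (hVηb : ∀ η, α₁ ‖η‖ ≤ Vη η ∧ Vη η ≤ α₂ ‖η‖)
    (α₃ γ : ℝ → ℝ) (hα₃ : IsClassK α₃) (hγ : IsClassK γ)
    (q : EuclideanSpace ℝ (Fin nξ) → EuclideanSpace ℝ (Fin nη) → EuclideanSpace ℝ (Fin nη))
    (hq : Continuous
      (fun p : EuclideanSpace ℝ (Fin nξ) × EuclideanSpace ℝ (Fin nη) => q p.1 p.2))
    (hVηd : ∀ ξ η, γ ‖ξ‖ ≤ ‖η‖ → fderiv ℝ Vη η (q ξ η) ≤ -α₃ ‖η‖)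
    (r rm cr : ℝ) (hr : 0 < r) (hrm0 : 0 < rm) (hrm : rm < r)
    (hcr : α₂ (γ r) ≤ cr)
    (T : EReal) (hT : 0 < T)
    (ξf : ℝ → EuclideanSpace ℝ (Fin nξ))
    (hξcont : ContinuousOn ξf {s : ℝ | 0 ≤ s ∧ (s : EReal) < T})
    (hξb : ∀ t : ℝ, 0 ≤ t → (t : EReal) < T → ‖ξf t‖ ≤ rm)
    (ηf : ℝ → EuclideanSpace ℝ (Fin nη))
    (hη : ∀ t : ℝ, 0 ≤ t → (t : EReal) < T →
      HasDerivWithinAt ηf (q (ξf t) (ηf t)) {s : ℝ | 0 ≤ s ∧ (s : EReal) < T} t)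
    (h0 : Vη (ηf 0) < cr) :
    ∀ t : ℝ, 0 ≤ t → (t : EReal) < T →
      Vη (ηf t) ≤ max (Vη (ηf 0)) (α₂ (γ rm)) ∧
        max (Vη (ηf 0)) (α₂ (γ rm)) < cr ∧
        ηf t ∈ {η : EuclideanSpace ℝ (Fin nη) | Vη η < cr} := by
  intro t ht htT
  set U : Set ℝ := {s : ℝ | 0 ≤ s ∧ (s : EReal) < T} with hU
  set M := max (Vη (ηf 0)) (α₂ (γ rm)) with hMdef
  have hγrm_nn : 0 ≤ γ rm := hγ.2.2.2 rm hrm0.le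
  have hγr_nn : 0 ≤ γ r := hγ.2.2.2 r hr.le
  have hγlt : γ rm < γ r := hγ.2.1 (Set.mem_Ici.mpr hrm0.le) (Set.mem_Ici.mpr hr.le) hrm
  have hMcr : M < cr := by
    apply max_lt h0
    calc α₂ (γ rm) < α₂ (γ r) :=
          (hα₂.1).2.1 (Set.mem_Ici.mpr hγrm_nn) (Set.mem_Ici.mpr hγr_nn) hγlt
      _ ≤ cr := hcr
  have hVdiff : Differentiable ℝ Vη := hVη.differentiable one_ne_zero
  have hηcont : ContinuousOn ηf U := fun s hs => (hη s hs.1 hs.2).continuousWithinAt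
  have hWcont : ContinuousOn (fun s => Vη (ηf s)) U :=
    hVdiff.continuous.comp_continuousOn hηcont
  -- derivative of W at interior points
  have hderiv : ∀ s : ℝ, 0 < s → (s : EReal) < T →
      HasDerivAt (fun u => Vη (ηf u)) (fderiv ℝ Vη (ηf s) (q (ξf s) (ηf s))) s := by
    intro s hs hsT
    obtain ⟨y, h1, h2⟩ := exists_between hsT
    have hytop : y ≠ ⊤ := ne_top_of_lt h2
    have hybot : y ≠ ⊥ := ne_bot_of_gt h1
    lift y to ℝ using ⟨hytop, hybot⟩
    have hsy : s < y := EReal.coe_lt_coe_iff.mp h1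
    have hmem : U ∈ nhds s := by
      have hopen : Set.Ioo (0 : ℝ) y ∈ nhds s := Ioo_mem_nhds hs hsy
      refine Filter.mem_of_superset hopen ?_
      intro u hu
      exact ⟨hu.1.le, lt_trans (EReal.coe_lt_coe_iff.mpr hu.2) h2⟩
    exact (hVdiff (ηf s)).hasFDerivAt.comp_hasDerivAt s ((hη s hs.le hsT).hasDerivAt hmem)
  -- sign of the derivative
  have hsign : ∀ s : ℝ, 0 ≤ s → (s : EReal) < T → α₂ (γ rm) < Vη (ηf s) →
      fderiv ℝ Vη (ηf s) (q (ξf s) (ηf s)) ≤ 0 := by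
    intro s hs hsT hgt
    have h2 : Vη (ηf s) ≤ α₂ ‖ηf s‖ := (hVηb (ηf s)).2
    have hlt : γ rm < ‖ηf s‖ := by
      by_contra h
      push_neg at h
      have := (hα₂.1).2.1.monotoneOn (Set.mem_Ici.mpr (norm_nonneg _))
        (Set.mem_Ici.mpr hγrm_nn) h
      linarith
    have hγξ : γ ‖ξf s‖ ≤ γ rm :=
      hγ.2.1.monotoneOn (Set.mem_Ici.mpr (norm_nonneg _)) (Set.mem_Ici.mpr hrm0.le)
        (hξb s hs hsT)
    have hd := hVηd (ξf s) (ηf s) (le_trans hγξ hlt.le)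
    have hα₃nn : 0 ≤ α₃ ‖ηf s‖ := hα₃.2.2.2 _ (norm_nonneg _)
    linarith
  -- main bound
  have hmain : Vη (ηf t) ≤ M := by
    by_contra hgt
    push_neg at hgt
    have hIccU : Set.Icc 0 t ⊆ U := fun s hs =>
      ⟨hs.1, lt_of_le_of_lt (EReal.coe_le_coe_iff.mpr hs.2) htT⟩
    have hWcontIcc : ContinuousOn (fun s => Vη (ηf s)) (Set.Icc 0 t) := hWcont.mono hIccU
    set S : Set ℝ := Set.Icc 0 t ∩ (fun s => Vη (ηf s)) ⁻¹' Set.Iic M with hSdef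
    have hS0 : (0 : ℝ) ∈ S := ⟨⟨le_rfl, ht⟩, Set.mem_preimage.mpr (Set.mem_Iic.mpr (le_max_left _ _))⟩
    have hSne : S.Nonempty := ⟨0, hS0⟩
    have hSbdd : BddAbove S := ⟨t, fun s hs => hs.1.2⟩
    have hSclosed : IsClosed S :=
      hWcontIcc.preimage_isClosed_of_isClosed isClosed_Icc isClosed_Iic
    have hs₀mem := hSclosed.csSup_mem hSne hSbdd
    set s₀ := sSup S with hs₀def
    obtain ⟨⟨hs₀0, hs₀t⟩, hs₀M⟩ := hs₀mem
    have hs₀M' : Vη (ηf s₀) ≤ M := hs₀M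
    have hs₀lt : s₀ < t := lt_of_le_of_ne hs₀t (by
      intro h
      rw [h] at hs₀M'
      linarith)
    have hWgt : ∀ s ∈ Set.Ioc s₀ t, M < Vη (ηf s) := by
      intro s hs
      by_contra h
      push_neg at h
      have hsS : s ∈ S := ⟨⟨hs₀0.trans hs.1.le, hs.2⟩, h⟩
      exact absurd (le_csSup hSbdd hsS) (not_le.mpr hs.1)
    have hanti : AntitoneOn (fun s => Vη (ηf s)) (Set.Icc s₀ t) := by
      apply antitoneOn_of_deriv_nonpos (convex_Icc _ _)
        (hWcontIcc.mono (Set.Icc_subset_Icc_left hs₀0))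
      · rw [interior_Icc]
        intro s hs
        have hsT : (s : EReal) < T := lt_trans (EReal.coe_lt_coe_iff.mpr hs.2) htT
        exact ((hderiv s (hs₀0.trans_lt hs.1) hsT).differentiableAt).differentiableWithinAt
      · rw [interior_Icc]
        intro s hs
        have hsT : (s : EReal) < T := lt_trans (EReal.coe_lt_coe_iff.mpr hs.2) htT
        have hs0 : 0 < s := hs₀0.trans_lt hs.1
        rw [(hderiv s hs0 hsT).deriv]
        refine hsign s hs0.le hsT ?_
        have := hWgt s ⟨hs.1, hs.2.le⟩
        exact lt_of_le_of_lt (le_max_right _ _) this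
    have hfin := hanti (Set.mem_Icc.mpr ⟨le_rfl, hs₀lt.le⟩)
      (Set.mem_Icc.mpr ⟨hs₀lt.le, le_rfl⟩) hs₀lt.le
    simp only at hfin
    linarith
  exact ⟨hmain, hMcr, lt_of_le_of_lt hmain hMcr⟩

end
end

section
/- Positive invariance of the error sublevel set under perturbed error dynamics. Assume the nominal design and Lyapunov redesign setup, let μ/4 lie in the range of ᾱ₃, set ᾱ∞(μ) := ᾱ₂(ᾱ₃⁻¹(μ/4)), and let c₀ ≥ ᾱ∞(μ). Let 0 < T ≤ ∞, let d : [0,T) → ℝ be piecewise continuous with |d(t)| ≤ δ for all t, and let ξ̄ : [0,T) → ℝ^{nξ} be continuously differentiable with ξ̄̇(t) = Aξ̄(t) + B(v_N(ξ̄(t)) + v_L(ξ̄(t)) + d(t)) for all t ∈ [0,T) and V_N(ξ̄(0)) ≤ c₀. Then V_N(ξ̄(t)) ≤ c₀ for all t ∈ [0,T); i.e., the set {ξ̄ ∈ ℝ^{nξ} : V_N(ξ̄) ≤ c₀} is positively invariant for the perturbed error dynamics. -/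
noncomputable section

lemma key_sat_bound (ρ μ δ w d : ℝ) (hδ : 0 ≤ δ) (hρ : δ ≤ ρ) (hμ : 0 < μ)
    (hd : |d| ≤ δ) : (-ρ * satFn (ρ * μ⁻¹ * w) + d) * w ≤ μ / 4 := by
  have hdρ : |d| ≤ ρ := hd.trans hρ
  have hdw : d * w ≤ ρ * |w| := by
    calc d * w ≤ |d * w| := le_abs_self _
    _ = |d| * |w| := abs_mul _ _
    _ ≤ ρ * |w| := mul_le_mul_of_nonneg_right hdρ (abs_nonneg _)
  by_cases h : |ρ * μ⁻¹ * w| ≤ 1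
  · rw [satFn, if_pos h]
    have hsq : ρ * |w| * μ ≤ ρ^2 * w^2 + μ^2/4 := by
      nlinarith [sq_nonneg (ρ * |w| - μ/2), abs_mul_abs_self w]
    have key : ρ * |w| ≤ μ⁻¹ * (ρ^2 * w^2) + μ/4 := by
      rw [← mul_le_mul_iff_left₀ hμ]
      calc ρ * |w| * μ ≤ ρ^2 * w^2 + μ^2/4 := hsq
        _ = (μ⁻¹ * (ρ^2 * w^2) + μ/4) * μ := by field_simp
    nlinarith [key, hdw]
  · rw [satFn, if_neg h]
    push_neg at h
    have hw : w ≠ 0 := by rintro rfl; simp at h; linarith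
    have hρ0 : 0 < ρ := by
      rcases lt_or_eq_of_le (hδ.trans hρ) with h' | h'
      · exact h'
      · rw [← h'] at h; simp at h; linarith
    have hc : 0 < ρ * μ⁻¹ := mul_pos hρ0 (inv_pos.mpr hμ)
    rcases lt_or_gt_of_ne hw with hw' | hw'
    · rw [Real.sign_of_neg (mul_neg_of_pos_of_neg hc hw')]
      have hd1 : -d ≤ ρ := (neg_le_abs d).trans hdρ
      nlinarith
    · rw [Real.sign_of_pos (mul_pos hc hw')]
      have hd1 : d ≤ ρ := (le_abs_self d).trans hdρ
      nlinarith

/-- **Positive invariance of the error sublevel set under perturbed error dynamics.**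
Here `s₃ = ᾱ₃⁻¹(μ/4)`, so that `ᾱ∞(μ) = ᾱ₂ s₃ ≤ c₀`. -/
theorem error_sublevel_invariance
    (nξ : ℕ) (hnξ : 1 ≤ nξ)
    (vN : EuclideanSpace ℝ (Fin nξ) → ℝ) (hvN : LocallyLipschitz vN)
    (VN : EuclideanSpace ℝ (Fin nξ) → ℝ) (hVN : ContDiff ℝ 1 VN)
    (αN₁ αN₂ : ℝ → ℝ) (hαN₁ : IsClassKInf αN₁) (hαN₂ : IsClassKInf αN₂)
    (hVNb : ∀ x, αN₁ ‖x‖ ≤ VN x ∧ VN x ≤ αN₂ ‖x‖)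
    (αN₃ : ℝ → ℝ) (hαN₃ : IsClassK αN₃)
    (hVNd : ∀ x, fderiv ℝ VN x (brunA nξ x + vN x • Bvec nξ) ≤ -αN₃ ‖x‖)
    (δ ρ μ : ℝ) (hδ : 0 ≤ δ) (hρ : δ ≤ ρ) (hμ : 0 < μ)
    (s₃ : ℝ) (hs₃ : 0 ≤ s₃) (hs₃v : αN₃ s₃ = μ / 4)
    (c₀ : ℝ) (hc₀ : αN₂ s₃ ≤ c₀)
    (T : EReal) (hT : 0 < T)
    -- the perturbation signal: piecewise continuous an bounded by δ
    (d : ℝ → ℝ)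
    (hdpc : ∃ S : Set ℝ, S.Countable ∧
      ContinuousOn d ({s : ℝ | 0 ≤ s ∧ (s : EReal) < T} \ S))
    (hdb : ∀ t : ℝ, 0 ≤ t → (t : EReal) < T → |d t| ≤ δ)
    -- the error trajectory: solution of the perturbed error dynamics on [0,T)
    (xbar : ℝ → EuclideanSpace ℝ (Fin nξ))
    (hx : ∀ t : ℝ, 0 ≤ t → (t : EReal) < T →
      HasDerivWithinAt xbar
        (brunA nξ (xbar t) +
          (vN (xbar t) + vLfun nξ VN ρ μ (xbar t) + d t) • Bvec nξ)
        {s : ℝ | 0 ≤ s ∧ (s : EReal) < T} t)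
    (h0 : VN (xbar 0) ≤ c₀) :
    ∀ t : ℝ, 0 ≤ t → (t : EReal) < T → VN (xbar t) ≤ c₀ := by
  intro t ht htT
  set S : Set ℝ := {s : ℝ | 0 ≤ s ∧ (s : EReal) < T} with hSdef
  set g : ℝ → ℝ := fun u => VN (xbar u) with hgdef
  have hVNdiff : Differentiable ℝ VN := hVN.differentiable one_ne_zero
  -- the derivative of g along the trajectory, within S
  have hgderiv : ∀ u ∈ S, HasDerivWithinAt g
      (fderiv ℝ VN (xbar u) (brunA nξ (xbar u) +
        (vN (xbar u) + vLfun nξ VN ρ μ (xbar u) + d u) • Bvec nξ)) S u := by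
    intro u hu
    exact (hVNdiff (xbar u)).hasFDerivAt.comp_hasDerivWithinAt u (hx u hu.1 hu.2)
  -- the key derivative bound when g u ≥ c₀
  have hDbound : ∀ u ∈ S, c₀ ≤ g u →
      fderiv ℝ VN (xbar u) (brunA nξ (xbar u) +
        (vN (xbar u) + vLfun nξ VN ρ μ (xbar u) + d u) • Bvec nξ) ≤ 0 := by
    intro u hu hcu
    set x := xbar u with hxdef
    set L := fderiv ℝ VN x with hLdef
    have hsplit : brunA nξ x + (vN x + vLfun nξ VN ρ μ x + d u) • Bvec nξ
        = (brunA nξ x + vN x • Bvec nξ) + (vLfun nξ VN ρ μ x + d u) • Bvec nξ := by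
      have hr : vN x + vLfun nξ VN ρ μ x + d u = vN x + (vLfun nξ VN ρ μ x + d u) := by ring
      rw [hr, add_smul, ← add_assoc]
    have h1 : L (brunA nξ x + vN x • Bvec nξ) ≤ -αN₃ ‖x‖ := hVNd x
    have h2 : (vLfun nξ VN ρ μ x + d u) * L (Bvec nξ) ≤ μ / 4 := by
      have hk := key_sat_bound ρ μ δ (L (Bvec nξ)) (d u) hδ hρ hμ (hdb u hu.1 hu.2)
      have : vLfun nξ VN ρ μ x = -ρ * satFn (ρ * μ⁻¹ * L (Bvec nξ)) := rfl
      rw [this]; linarith [hk]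
    have hxs : s₃ ≤ ‖x‖ := by
      by_contra hlt
      push_neg at hlt
      have hmono := hαN₂.1.2.1 (Set.mem_Ici.mpr (norm_nonneg x)) (Set.mem_Ici.mpr hs₃) hlt
      have hVx : c₀ ≤ VN x := hcu
      have := (hVNb x).2
      linarith
    have h3 : μ / 4 ≤ αN₃ ‖x‖ := by
      rw [← hs₃v]
      exact hαN₃.2.1.monotoneOn (Set.mem_Ici.mpr hs₃)
        (Set.mem_Ici.mpr (hs₃.trans hxs)) hxs
    calc L (brunA nξ x + (vN x + vLfun nξ VN ρ μ x + d u) • Bvec nξ)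
        = L (brunA nξ x + vN x • Bvec nξ) +
            (vLfun nξ VN ρ μ x + d u) * L (Bvec nξ) := by
          rw [hsplit, map_add, map_smul, smul_eq_mul]
      _ ≤ -αN₃ ‖x‖ + μ / 4 := add_le_add h1 h2
      _ ≤ 0 := by linarith
  -- continuity of g on S
  have hgc : ContinuousOn g S := fun u hu => (hgderiv u hu).continuousWithinAt
  -- main invariance argument
  by_contra hgt
  push_neg at hgt
  have hsubset : Set.Icc 0 t ⊆ S := fun u hu =>
    ⟨hu.1, lt_of_le_of_lt (EReal.coe_le_coe_iff.mpr hu.2) htT⟩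
  set K : Set ℝ := Set.Icc 0 t ∩ g ⁻¹' Set.Iic c₀ with hKdef
  have hKc : IsClosed K :=
    (hgc.mono hsubset).preimage_isClosed_of_isClosed isClosed_Icc isClosed_Iic
  have hKne : K.Nonempty := ⟨0, ⟨le_refl 0, ht⟩, h0⟩
  have hKbdd : BddAbove K := ⟨t, fun u hu => hu.1.2⟩
  set s0 := sSup K with hs0def
  have hsK : s0 ∈ K := hKc.csSup_mem hKne hKbdd
  obtain ⟨⟨hs0, hst'⟩, hgs⟩ := hsK
  have hgs' : g s0 ≤ c₀ := hgs
  have hslt : s0 < t := lt_of_le_of_ne hst' (by intro heq; rw [heq] at hgs'; exact absurd hgs' (not_le.mpr hgt))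
  have habove : ∀ u ∈ Set.Ioc s0 t, c₀ < g u := by
    intro u hu
    by_contra hle
    push_neg at hle
    have huK : u ∈ K := ⟨⟨hs0.trans hu.1.le, hu.2⟩, hle⟩
    exact absurd (le_csSup hKbdd huK) (not_le.mpr hu.1)
  have hIccsub : Set.Icc s0 t ⊆ Set.Icc 0 t := Set.Icc_subset_Icc hs0 le_rfl
  have hanti : AntitoneOn g (Set.Icc s0 t) := by
    apply antitoneOn_of_deriv_nonpos (convex_Icc s0 t) (hgc.mono (hIccsub.trans hsubset))
    · intro u hu
      rw [interior_Icc] at hu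
      have hu0 : 0 < u := lt_of_le_of_lt hs0 hu.1
      have huT : (u : EReal) < T :=
        lt_trans (EReal.coe_lt_coe_iff.mpr hu.2) htT
      have huS : u ∈ S := ⟨hu0.le, huT⟩
      have hnhds : S ∈ nhds u := by
        apply mem_nhds_iff.mpr
        refine ⟨Set.Ioi (0:ℝ) ∩ {v : ℝ | (v : EReal) < T}, fun v hv => ⟨hv.1.le, hv.2⟩, ?_, hu0, huT⟩
        exact isOpen_Ioi.inter (isOpen_Iio.preimage continuous_coe_real_ereal)
      exact ((hgderiv u huS).hasDerivAt hnhds).differentiableAt.differentiableWithinAt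
    · intro u hu
      rw [interior_Icc] at hu
      have hu0 : 0 < u := lt_of_le_of_lt hs0 hu.1
      have huT : (u : EReal) < T :=
        lt_trans (EReal.coe_lt_coe_iff.mpr hu.2) htT
      have huS : u ∈ S := ⟨hu0.le, huT⟩
      have hnhds : S ∈ nhds u := by
        apply mem_nhds_iff.mpr
        refine ⟨Set.Ioi (0:ℝ) ∩ {v : ℝ | (v : EReal) < T}, fun v hv => ⟨hv.1.le, hv.2⟩, ?_, hu0, huT⟩
        exact isOpen_Ioi.inter (isOpen_Iio.preimage continuous_coe_real_ereal)
      have hda := (hgderiv u huS).hasDerivAt hnhds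
      rw [hda.deriv]
      exact hDbound u huS (habove u ⟨hu.1, hu.2.le⟩).le
  have := hanti (Set.left_mem_Icc.mpr hslt.le) (Set.right_mem_Icc.mpr hslt.le) hslt.le
  have : g t ≤ c₀ := this.trans hgs'
  exact absurd this (not_le.mpr hgt)


end
end
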